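/- arXiv:2603.28629 — 7 statements merged into one kernel-verified Lean document; each statement's English description precedes it below -/
import Mathlib

section
/- Let S : M_n(ℂ) → ℂ have group gradient D. Let U : ℝ → M_n(ℂ) be differentiable with U(t) invertible for all t, satisfying the anti-holomorphic gradient flow equation U'(t) = (D(U(t)))ᴴ · U(t). Then for every t, the map t ↦ S(U(t)) is differentiable with derivative tr((D(U(t)))ᴴ · D(U(t))). -/
open Matrix

attribute [local instance] Matrix.frobeniusNormedAddCommGroup Matrix.frobeniusNormedSpace

theorem flow_action_derivative_general {n : ℕ}
    (S : Matrix (Fin n) (Fin n) ℂ → ℂ)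
    (D : Matrix (Fin n) (Fin n) ℂ → Matrix (Fin n) (Fin n) ℂ)
    (hS : Differentiable ℝ S)
    (hD : ∀ U : Matrix (Fin n) (Fin n) ℂ, IsUnit U →
      ∀ X : Matrix (Fin n) (Fin n) ℂ, fderiv ℝ S U (X * U) = (X * D U).trace)
    (U : ℝ → Matrix (Fin n) (Fin n) ℂ)
    (hUinv : ∀ t : ℝ, IsUnit (U t))
    (hflow : ∀ t : ℝ, HasDerivAt U ((D (U t))ᴴ * U t) t) :
    ∀ t : ℝ, HasDerivAt (fun s : ℝ => S (U s)) (((D (U t))ᴴ * D (U t)).trace) t := by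
  intro t
  have chain := (hS (U t)).hasFDerivAt.comp_hasDerivAt t (hflow t)
  exact (hD (U t) (hUinv t) _) ▸ chain

/-- If `D` is the group gradient of `S` and `U : ℝ → M_n(ℂ)` solves the
anti-holomorphic gradient flow `U' = (D U)ᴴ * U` through invertible matrices, then
`t ↦ S (U t)` is differentiable with derivative `tr ((D (U t))ᴴ * D (U t))`. -/
theorem flow_action_derivative {n : ℕ} [NeZero n]
    (S : Matrix (Fin n) (Fin n) ℂ → ℂ)
    (D : Matrix (Fin n) (Fin n) ℂ → Matrix (Fin n) (Fin n) ℂ)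
    (hS : Differentiable ℝ S)
    (hD : ∀ U : Matrix (Fin n) (Fin n) ℂ, IsUnit U →
      ∀ X : Matrix (Fin n) (Fin n) ℂ, fderiv ℝ S U (X * U) = (X * D U).trace)
    (U : ℝ → Matrix (Fin n) (Fin n) ℂ)
    (hUinv : ∀ t : ℝ, IsUnit (U t))
    (hflow : ∀ t : ℝ, HasDerivAt U ((D (U t))ᴴ * U t) t) :
    ∀ t : ℝ, HasDerivAt (fun s : ℝ => S (U s)) (((D (U t))ᴴ * D (U t)).trace) t :=
  flow_action_derivative_general S D hS hD U hUinv hflow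
end

section
/- Let S : M_n(ℂ) → ℂ have group gradient D, and let U : ℝ → M_n(ℂ) be differentiable with U(t) invertible for all t and U'(t) = (D(U(t)))ᴴ · U(t). Then: (i) t ↦ Im S(U(t)) is constant; (ii) t ↦ Re S(U(t)) is monotone nondecreasing; (iii) the derivative of t ↦ Re S(U(t)) at time t equals tr((D(U(t)))ᴴ · D(U(t))), which is a nonnegative real number and vanishes if and only if D(U(t)) = 0 (i.e., U(t) is a critical point). -/
/-!
By the chain rule and the group-gradient identity with `X = (D U)ᴴ`, the flow gives
`d/dt S(U(t)) = tr((D U)ᴴ D U)`, the trace of a positive semidefinite matrix. It is therefore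
`≥ 0` in the partial order of `ℂ`, i.e. real and nonnegative, and it vanishes only when `D U = 0`.
A complex curve whose velocity is `≥ 0` in this order has constant imaginary part and
nondecreasing real part.
-/

open Matrix
open scoped ComplexOrder

attribute [local instance] Matrix.frobeniusNormedAddCommGroup Matrix.frobeniusNormedSpace

theorem Matrix.trace_conjTranspose_mul_self_nonneg {m n : Type*} [Fintype m] [Fintype n]
    (A : Matrix m n ℂ) : 0 ≤ (Aᴴ * A).trace :=
  (posSemidef_conjTranspose_mul_self A).trace_nonneg

section ComplexCurve

variable {f f' : ℝ → ℂ}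

theorem HasDerivAt.complex_re {z : ℂ} {t : ℝ} (hf : HasDerivAt f z t) :
    HasDerivAt (fun s => (f s).re) z.re t :=
  Complex.reCLM.hasFDerivAt.comp_hasDerivAt t hf

theorem HasDerivAt.complex_im {z : ℂ} {t : ℝ} (hf : HasDerivAt f z t) :
    HasDerivAt (fun s => (f s).im) z.im t :=
  Complex.imCLM.hasFDerivAt.comp_hasDerivAt t hf

theorem im_eq_of_hasDerivAt_nonneg (hf : ∀ t, HasDerivAt f (f' t) t) (hf' : ∀ t, 0 ≤ f' t)
    (t₁ t₂ : ℝ) : (f t₁).im = (f t₂).im := by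
  have him : ∀ t, HasDerivAt (fun s => (f s).im) 0 t := fun t => by
    simpa only [← (Complex.nonneg_iff.1 (hf' t)).2] using (hf t).complex_im
  exact is_const_of_deriv_eq_zero (fun t => (him t).differentiableAt) (fun t => (him t).deriv) _ _

theorem monotone_re_of_hasDerivAt_nonneg (hf : ∀ t, HasDerivAt f (f' t) t)
    (hf' : ∀ t, 0 ≤ f' t) : Monotone fun t => (f t).re :=
  monotone_of_hasDerivAt_nonneg (fun t => (hf t).complex_re)
    fun t => (Complex.nonneg_iff.1 (hf' t)).1

end ComplexCurve

theorem flow_monotonicity_general {n : ℕ}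
    (S : Matrix (Fin n) (Fin n) ℂ → ℂ)
    (D : Matrix (Fin n) (Fin n) ℂ → Matrix (Fin n) (Fin n) ℂ)
    (hS : Differentiable ℝ S)
    (hD : ∀ U : Matrix (Fin n) (Fin n) ℂ, IsUnit U →
      ∀ X : Matrix (Fin n) (Fin n) ℂ, fderiv ℝ S U (X * U) = (X * D U).trace)
    (U : ℝ → Matrix (Fin n) (Fin n) ℂ)
    (hUinv : ∀ t : ℝ, IsUnit (U t))
    (hflow : ∀ t : ℝ, HasDerivAt U ((D (U t))ᴴ * U t) t) :
    (∀ t₁ t₂ : ℝ, (S (U t₁)).im = (S (U t₂)).im) ∧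
    Monotone (fun t : ℝ => (S (U t)).re) ∧
    ∀ t : ℝ,
      HasDerivAt (fun s : ℝ => (S (U s)).re) (((D (U t))ᴴ * D (U t)).trace).re t ∧
      (((D (U t))ᴴ * D (U t)).trace).im = 0 ∧
      0 ≤ (((D (U t))ᴴ * D (U t)).trace).re ∧
      (((D (U t))ᴴ * D (U t)).trace = 0 ↔ D (U t) = 0) := by
  have hSU : ∀ t, HasDerivAt (fun s => S (U s)) ((D (U t))ᴴ * D (U t)).trace t := fun t =>
    ((hS (U t)).hasFDerivAt.comp_hasDerivAt t (hflow t)).congr_deriv (hD _ (hUinv t) _)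
  have hnonneg : ∀ t, 0 ≤ ((D (U t))ᴴ * D (U t)).trace := fun t =>
    trace_conjTranspose_mul_self_nonneg _
  refine ⟨im_eq_of_hasDerivAt_nonneg hSU hnonneg, monotone_re_of_hasDerivAt_nonneg hSU hnonneg,
    fun t => ⟨(hSU t).complex_re, (Complex.nonneg_iff.1 (hnonneg t)).2.symm,
      (Complex.nonneg_iff.1 (hnonneg t)).1, trace_conjTranspose_mul_self_eq_zero_iff⟩⟩

/-- Along the anti-holomorphic gradient flow `U' = (D U)ᴴ * U` of an action `S`
with group gradient `D`: (i) `Im S(U(t))` is constant, (ii) `Re S(U(t))` is monotone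
nondecreasing, and (iii) the derivative of `Re S(U(t))` equals `tr((D(U(t)))ᴴ · D(U(t)))`,
which is a nonnegative real number vanishing iff `D(U(t)) = 0`. -/
theorem flow_monotonicity {n : ℕ} [NeZero n]
    (S : Matrix (Fin n) (Fin n) ℂ → ℂ)
    (D : Matrix (Fin n) (Fin n) ℂ → Matrix (Fin n) (Fin n) ℂ)
    (hS : Differentiable ℝ S)
    (hD : ∀ U : Matrix (Fin n) (Fin n) ℂ, IsUnit U →
      ∀ X : Matrix (Fin n) (Fin n) ℂ, fderiv ℝ S U (X * U) = (X * D U).trace)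
    (U : ℝ → Matrix (Fin n) (Fin n) ℂ)
    (hUinv : ∀ t : ℝ, IsUnit (U t))
    (hflow : ∀ t : ℝ, HasDerivAt U ((D (U t))ᴴ * U t) t) :
    (∀ t₁ t₂ : ℝ, (S (U t₁)).im = (S (U t₂)).im) ∧
    Monotone (fun t : ℝ => (S (U t)).re) ∧
    ∀ t : ℝ,
      HasDerivAt (fun s : ℝ => (S (U s)).re) (((D (U t))ᴴ * D (U t)).trace).re t ∧
      (((D (U t))ᴴ * D (U t)).trace).im = 0 ∧
      0 ≤ (((D (U t))ᴴ * D (U t)).trace).re ∧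
      (((D (U t))ᴴ * D (U t)).trace = 0 ↔ D (U t) = 0) :=
  flow_monotonicity_general S D hS hD U hUinv hflow
end

section
/- Let β ∈ ℂ and DS(U) := −(β/(2n))·𝒫(U − U⁻¹) with 𝒫M := M − (tr M / n)·1. Let U : ℝ → M_n(ℂ) be differentiable with U(t) invertible for all t and U'(t) = (DS(U(t)))ᴴ · U(t). Then det U(t) is constant in t; in particular, if det U(0) = 1, then U(t) ∈ SL(n,ℂ) for all t (the gradient flow of the one-site model preserves the complexified group SL(n,ℂ)). -/
/-! Jacobi's formula: along a flow `U' = B U` one has `(det U)' = tr B · det U`. The gradient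
`DS(U)` is a multiple of a traceless projection, so `tr DS(U)ᴴ = conj (tr DS(U)) = 0`, and `det U`
has zero derivative everywhere. -/

open Matrix

attribute [local instance] Matrix.frobeniusNormedAddCommGroup Matrix.frobeniusNormedSpace

/-- The traceless projection `𝒫 M = M − (tr M / n)·1`. -/
noncomputable def tracelessPart {n : ℕ} (M : Matrix (Fin n) (Fin n) ℂ) :
    Matrix (Fin n) (Fin n) ℂ :=
  M - (M.trace / (n : ℂ)) • (1 : Matrix (Fin n) (Fin n) ℂ)

/-- The group gradient `DS(U) = −(β/(2n))·𝒫(U − U⁻¹)` of the one-site action. -/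
noncomputable def oneSiteGrad {n : ℕ} (β : ℂ) (U : Matrix (Fin n) (Fin n) ℂ) :
    Matrix (Fin n) (Fin n) ℂ :=
  -(β / (2 * (n : ℂ))) • tracelessPart (U - U⁻¹)

theorem HasDerivAt.matrix_apply {𝕜 E ι κ : Type*} [NontriviallyNormedField 𝕜] [CompleteSpace 𝕜]
    [NormedAddCommGroup E] [NormedSpace 𝕜 E] [FiniteDimensional 𝕜 E] [Fintype ι] [Fintype κ]
    {U : 𝕜 → Matrix ι κ E} {U' : Matrix ι κ E} {t : 𝕜} (h : HasDerivAt U U' t) (i : ι) (j : κ) :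
    HasDerivAt (fun s => U s i j) (U' i j) t :=
  (entryLinearMap 𝕜 E i j).toContinuousLinearMap.hasFDerivAt.comp_hasDerivAt t h

namespace Matrix

variable {𝕜 R ι : Type*} [Fintype ι] [DecidableEq ι]

theorem sum_det_updateRow_mul [CommRing R] (A B : Matrix ι ι R) :
    ∑ i, (A.updateRow i ((B * A) i)).det = B.trace * A.det := by
  have hrow : ∀ i, (B * A) i = ∑ k, B i k • A k := fun i => by
    ext j
    simp [mul_apply]
  simp only [hrow, det_updateRow_sum, smul_eq_mul, trace, diag, Finset.sum_mul]

variable [NontriviallyNormedField 𝕜] [NormedCommRing R] [NormedAlgebra 𝕜 R]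

/-- Jacobi's formula, from the multilinearity of the determinant in the rows. -/
theorem hasDerivAt_det {U : 𝕜 → Matrix ι ι R} {U' : Matrix ι ι R} {t : 𝕜}
    (h : ∀ i j, HasDerivAt (fun s => U s i j) (U' i j) t) :
    HasDerivAt (fun s => (U s).det) (∑ i, ((U t).updateRow i (U' i)).det) t := by
  let detRows : ContinuousMultilinearMap 𝕜 (fun _ : ι => ι → R) R :=
    ⟨(detRowAlternating : (ι → R) [⋀^ι]→ₗ[R] R).toMultilinearMap.restrictScalars 𝕜,
      continuous_id.matrix_det⟩
  have hrows : HasDerivAt (fun s => of.symm (U s)) (of.symm U') t :=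
    hasDerivAt_pi.2 fun i => hasDerivAt_pi.2 fun j => h i j
  refine (detRows.hasFDerivAt (of.symm (U t))).comp_hasDerivAt t hrows |>.congr_deriv ?_
  simp only [ContinuousMultilinearMap.linearDeriv_apply]
  rfl

theorem hasDerivAt_det_of_hasDerivAt_mul [CompleteSpace 𝕜] [FiniteDimensional 𝕜 R]
    {U : 𝕜 → Matrix ι ι R} {B : Matrix ι ι R} {t : 𝕜} (h : HasDerivAt U (B * U t) t) :
    HasDerivAt (fun s => (U s).det) (B.trace * (U t).det) t := by
  rw [← sum_det_updateRow_mul]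
  exact hasDerivAt_det h.matrix_apply

end Matrix

theorem trace_tracelessPart {n : ℕ} (M : Matrix (Fin n) (Fin n) ℂ) :
    (tracelessPart M).trace = 0 := by
  rcases n.eq_zero_or_pos with rfl | hn
  · simp [trace]
  · rw [tracelessPart, trace_sub, trace_smul, trace_one, Fintype.card_fin, smul_eq_mul,
      div_mul_cancel₀ _ (Nat.cast_ne_zero.2 hn.ne'), sub_self]

theorem trace_oneSiteGrad {n : ℕ} (β : ℂ) (U : Matrix (Fin n) (Fin n) ℂ) :
    (oneSiteGrad β U).trace = 0 := by
  rw [oneSiteGrad, trace_smul, trace_tracelessPart, smul_zero]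

theorem oneSite_flow_preserves_det_general {n : ℕ} (β : ℂ)
    (U : ℝ → Matrix (Fin n) (Fin n) ℂ)
    (hflow : ∀ t : ℝ, HasDerivAt U ((oneSiteGrad β (U t))ᴴ * U t) t) :
    (∀ t₁ t₂ : ℝ, (U t₁).det = (U t₂).det) ∧
    ((U 0).det = 1 → ∀ t : ℝ, (U t).det = 1) := by
  have hdet : ∀ t, HasDerivAt (fun s => (U s).det) 0 t := fun t => by
    simpa [trace_conjTranspose, trace_oneSiteGrad] using
      hasDerivAt_det_of_hasDerivAt_mul (hflow t)
  have hconst : ∀ t₁ t₂ : ℝ, (U t₁).det = (U t₂).det :=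
    is_const_of_deriv_eq_zero (fun t => (hdet t).differentiableAt) (fun t => (hdet t).deriv)
  exact ⟨hconst, fun h0 t => (hconst t 0).trans h0⟩

/-- The gradient flow of the one-site model preserves the determinant;
in particular, if `det U(0) = 1` then `U(t) ∈ SL(n,ℂ)` for all `t`. -/
theorem oneSite_flow_preserves_det {n : ℕ} [NeZero n] (β : ℂ)
    (U : ℝ → Matrix (Fin n) (Fin n) ℂ)
    (hUinv : ∀ t : ℝ, IsUnit (U t))
    (hflow : ∀ t : ℝ, HasDerivAt U ((oneSiteGrad β (U t))ᴴ * U t) t) :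
    (∀ t₁ t₂ : ℝ, (U t₁).det = (U t₂).det) ∧
    ((U 0).det = 1 → ∀ t : ℝ, (U t).det = 1) :=
  oneSite_flow_preserves_det_general β U hflow
end

section
/- Let U₀, π₀ be n×n complex matrices and set A := π₀ − π₀ᴴ. Define U(s) := exp(sA)·exp(sπ₀ᴴ)·U₀ and π(s) := exp(sA)·π₀·exp(−sA) for s ∈ ℝ. Then (U(s), π(s)) is the solution of the kinetic Hamilton equations: U(0) = U₀, π(0) = π₀, U'(s) = π(s)·U(s), and π'(s) = [π(s), π(s)ᴴ] = π(s)·π(s)ᴴ − π(s)ᴴ·π(s) for all s. -/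
/-!
Since `A = π₀ - π₀ᴴ` is skew-Hermitian, `exp (s A)` is unitary, so `π(s)ᴴ` is the same conjugate
`exp (s A) π₀ᴴ exp (-s A)` of `π₀ᴴ`, and conjugation is multiplicative. Differentiating,
`π' = exp (s A) [A, π₀] exp (-s A)` with `[A, π₀] = [π₀, π₀ᴴ]`, which conjugates to `[π, πᴴ]`.
For `U`, the product rule gives `U' = exp (s A) (A + π₀ᴴ) exp (s π₀ᴴ) U₀`; as `A + π₀ᴴ = π₀`,
inserting `exp (-s A) exp (s A) = 1` after `π₀` rewrites this as `π U`.
-/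

open Matrix

attribute [local instance] Matrix.frobeniusNormedAddCommGroup Matrix.frobeniusNormedSpace

attribute [local instance] Matrix.frobeniusNormedRing Matrix.frobeniusNormedAlgebra

open NormedSpace

theorem star_exp_conj {𝔸 : Type*} [Ring 𝔸] [TopologicalSpace 𝔸] [IsTopologicalRing 𝔸]
    [T2Space 𝔸] [StarRing 𝔸] [ContinuousStar 𝔸] {x : 𝔸} (hx : star x = -x) (a : 𝔸) :
    star (exp x * a * exp (-x)) = exp x * star a * exp (-x) := by
  rw [star_mul, star_mul, star_exp, star_exp, star_neg, hx, neg_neg, mul_assoc]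

section BanachAlgebra

variable {𝔸 : Type*} [NormedRing 𝔸] [NormedAlgebra ℝ 𝔸] [CompleteSpace 𝔸]

theorem exp_neg_mul_exp (x : 𝔸) : exp (-x) * exp x = 1 := by
  let +nondep : NormedAlgebra ℚ 𝔸 := .restrictScalars ℚ ℝ 𝔸
  rw [← exp_add_of_commute (Commute.refl x).neg_left, neg_add_cancel, exp_zero]

theorem exp_conj_mul_exp_conj (x a b : 𝔸) :
    (exp x * a * exp (-x)) * (exp x * b * exp (-x)) = exp x * (a * b) * exp (-x) := by
  calc (exp x * a * exp (-x)) * (exp x * b * exp (-x))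
      = exp x * a * (exp (-x) * exp x) * b * exp (-x) := by simp only [mul_assoc]
    _ = exp x * (a * b) * exp (-x) := by rw [exp_neg_mul_exp, mul_one, mul_assoc (exp x)]

theorem hasDerivAt_exp_smul_conj (a x : 𝔸) (s : ℝ) :
    HasDerivAt (fun t : ℝ => exp (t • a) * x * exp (-(t • a)))
      (exp (s • a) * (a * x - x * a) * exp (-(s • a))) s := by
  have hneg : HasDerivAt (fun t : ℝ => exp (-(t • a))) (-a * exp (-(s • a))) s := by
    simpa only [smul_neg] using hasDerivAt_exp_smul_const' (-a) s
  refine (((hasDerivAt_exp_smul_const a s).mul_const x).mul hneg).congr_deriv ?_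
  noncomm_ring

theorem hasDerivAt_exp_smul_mul_exp_smul_mul (a b u : 𝔸) (s : ℝ) :
    HasDerivAt (fun t : ℝ => exp (t • a) * exp (t • b) * u)
      ((exp (s • a) * (a + b) * exp (-(s • a))) * (exp (s • a) * exp (s • b) * u)) s := by
  refine (((hasDerivAt_exp_smul_const a s).mul
    (hasDerivAt_exp_smul_const' b s)).mul_const u).congr_deriv ?_
  calc _ = exp (s • a) * (a + b) * 1 * exp (s • b) * u := by noncomm_ring
    _ = _ := by rw [← exp_neg_mul_exp (s • a)]; noncomm_ring

variable [StarRing 𝔸] [ContinuousStar 𝔸]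

theorem exp_conj_commutator_star {x : 𝔸} (hx : star x = -x) (p : 𝔸) :
    exp x * (p * star p - star p * p) * exp (-x) =
      (exp x * p * exp (-x)) * star (exp x * p * exp (-x)) -
        star (exp x * p * exp (-x)) * (exp x * p * exp (-x)) := by
  rw [star_exp_conj hx, exp_conj_mul_exp_conj, exp_conj_mul_exp_conj, mul_sub, sub_mul]

theorem hasDerivAt_exp_smul_sub_star_conj [StarModule ℝ 𝔸] (p : 𝔸)
    {q : ℝ → 𝔸} (hq : q = fun t : ℝ => exp (t • (p - star p)) * p * exp (-(t • (p - star p))))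
    (s : ℝ) : HasDerivAt q (q s * star (q s) - star (q s) * q s) s := by
  have hskew : star (s • (p - star p)) = -(s • (p - star p)) := by
    rw [star_smul, star_trivial, star_sub, star_star, ← smul_neg, neg_sub]
  subst hq
  rw [← exp_conj_commutator_star hskew]
  convert hasDerivAt_exp_smul_conj (p - star p) p s using 3
  noncomm_ring

end BanachAlgebra

theorem kinetic_flow_solution_general {n : ℕ}
    (U₀ π₀ : Matrix (Fin n) (Fin n) ℂ)
    (A : Matrix (Fin n) (Fin n) ℂ) (hA : A = π₀ - π₀ᴴ)
    (U π : ℝ → Matrix (Fin n) (Fin n) ℂ)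
    (hU : U = fun s : ℝ => NormedSpace.exp (s • A) * NormedSpace.exp (s • π₀ᴴ) * U₀)
    (hπ : π = fun s : ℝ => NormedSpace.exp (s • A) * π₀ * NormedSpace.exp (-(s • A))) :
    U 0 = U₀ ∧ π 0 = π₀ ∧
    (∀ s : ℝ, HasDerivAt U (π s * U s) s) ∧
    (∀ s : ℝ, HasDerivAt π (π s * (π s)ᴴ - (π s)ᴴ * π s) s) := by
  subst hA
  refine ⟨by simp [hU], by simp [hπ], fun s => ?_,
    hasDerivAt_exp_smul_sub_star_conj π₀ hπ⟩
  have hU' := hasDerivAt_exp_smul_mul_exp_smul_mul (π₀ - π₀ᴴ) π₀ᴴ U₀ s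
  rw [sub_add_cancel] at hU'
  subst hU hπ
  exact hU'

/-- With `A = π₀ − π₀ᴴ`, the curves `U(s) = exp(sA)·exp(sπ₀ᴴ)·U₀` and
`π(s) = exp(sA)·π₀·exp(−sA)` solve the kinetic Hamilton equations
`U' = π·U`, `π' = [π, πᴴ]` with initial data `(U₀, π₀)`. -/
theorem kinetic_flow_solution {n : ℕ} [NeZero n]
    (U₀ π₀ : Matrix (Fin n) (Fin n) ℂ)
    (A : Matrix (Fin n) (Fin n) ℂ) (hA : A = π₀ - π₀ᴴ)
    (U π : ℝ → Matrix (Fin n) (Fin n) ℂ)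
    (hU : U = fun s : ℝ => NormedSpace.exp (s • A) * NormedSpace.exp (s • π₀ᴴ) * U₀)
    (hπ : π = fun s : ℝ => NormedSpace.exp (s • A) * π₀ * NormedSpace.exp (-(s • A))) :
    U 0 = U₀ ∧ π 0 = π₀ ∧
    (∀ s : ℝ, HasDerivAt U (π s * U s) s) ∧
    (∀ s : ℝ, HasDerivAt π (π s * (π s)ᴴ - (π s)ᴴ * π s) s) :=
  kinetic_flow_solution_general U₀ π₀ A hA U π hU hπ
end

section
/- Let π : ℝ → M_n(ℂ) be differentiable with π'(s) = [π(s), π(s)ᴴ] for all s. Then both the anti-hermitian part π(s) − π(s)ᴴ and the kinetic energy ½·Re tr(π(s)ᴴ·π(s)) are constant in s. -/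
/-!
The generator `D = [π, πᴴ]` of the flow is hermitian, so `π` and `πᴴ` have the same derivative
and `π − πᴴ` is constant. For the energy, `d/ds tr(πᴴπ) = tr(Dπ + πᴴD) = tr(D(π + πᴴ))`, which
vanishes by cyclicity of the trace; the argument works for any continuous tracial functional on a
normed star algebra.
-/

open Matrix

attribute [local instance] Matrix.frobeniusNormedAddCommGroup Matrix.frobeniusNormedSpace
attribute [local instance] Matrix.frobeniusNormedRing Matrix.frobeniusNormedAlgebra

theorem isSelfAdjoint_mul_star_sub_star_mul {R : Type*} [Ring R] [StarRing R] (a : R) :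
    IsSelfAdjoint (a * star a - star a * a) :=
  (IsSelfAdjoint.mul_star_self a).sub (.star_mul_self a)

section

variable {F : Type*} [NormedAddCommGroup F] [NormedSpace ℝ F] [StarAddMonoid F] [StarModule ℝ F]
  [ContinuousStar F]

theorem sub_star_eq_of_hasDerivAt_isSelfAdjoint {f f' : ℝ → F} (hf : ∀ s, HasDerivAt f (f' s) s)
    (hf' : ∀ s, IsSelfAdjoint (f' s)) (s₁ s₂ : ℝ) :
    f s₁ - star (f s₁) = f s₂ - star (f s₂) := by
  have h : ∀ s, HasDerivAt (fun t ↦ f t - star (f t)) 0 s := fun s ↦ by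
    have h' := (hf s).sub (hf s).star
    rwa [(hf' s).star_eq, sub_self] at h'
  exact is_const_of_deriv_eq_zero (fun s ↦ (h s).differentiableAt) (fun s ↦ (h s).deriv) s₁ s₂

end

theorem map_commutator_mul_add_eq_zero {A E G : Type*} [Ring A] [AddCommGroup E] [FunLike G A E]
    [AddMonoidHomClass G A E] (τ : G) (hτ : ∀ a b, τ (a * b) = τ (b * a)) (a b : A) :
    τ ((a * b - b * a) * (a + b)) = 0 := by
  have h₁ : τ (a * b * b) = τ (b * a * b) := by rw [hτ, ← mul_assoc]
  have h₂ : τ (a * b * a) = τ (b * a * a) := by rw [mul_assoc, hτ]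
  simp only [sub_mul, mul_add, map_add, map_sub, h₁, h₂]
  abel

section

variable {A E : Type*} [NormedRing A] [NormedAlgebra ℝ A] [StarRing A] [StarModule ℝ A]
  [ContinuousStar A] [NormedAddCommGroup E] [NormedSpace ℝ E]

theorem map_star_mul_self_eq_of_hasDerivAt_commutator {τ : A →L[ℝ] E}
    (hτ : ∀ a b, τ (a * b) = τ (b * a)) {f : ℝ → A}
    (hf : ∀ s, HasDerivAt f (f s * star (f s) - star (f s) * f s) s) (s₁ s₂ : ℝ) :
    τ (star (f s₁) * f s₁) = τ (star (f s₂) * f s₂) := by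
  have h : ∀ s, HasDerivAt (fun t ↦ τ (star (f t) * f t)) 0 s := fun s ↦ by
    have h' := τ.hasFDerivAt.comp_hasDerivAt s ((hf s).star.mul (hf s))
    rwa [(isSelfAdjoint_mul_star_sub_star_mul (f s)).star_eq, map_add, hτ (star (f s)),
      ← map_add, ← mul_add, map_commutator_mul_add_eq_zero τ hτ] at h'
  exact is_const_of_deriv_eq_zero (fun s ↦ (h s).differentiableAt) (fun s ↦ (h s).deriv) s₁ s₂

end

theorem kinetic_flow_invariants_general {n : ℕ}
    (π : ℝ → Matrix (Fin n) (Fin n) ℂ)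
    (hπ : ∀ s : ℝ, HasDerivAt π (π s * (π s)ᴴ - (π s)ᴴ * π s) s) :
    (∀ s₁ s₂ : ℝ, π s₁ - (π s₁)ᴴ = π s₂ - (π s₂)ᴴ) ∧
    (∀ s₁ s₂ : ℝ,
      (1 / 2 : ℝ) * (((π s₁)ᴴ * π s₁).trace).re = (1 / 2 : ℝ) * (((π s₂)ᴴ * π s₂).trace).re) := by
  refine ⟨sub_star_eq_of_hasDerivAt_isSelfAdjoint hπ
    fun s ↦ isSelfAdjoint_mul_star_sub_star_mul (π s), fun s₁ s₂ ↦ ?_⟩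
  have := map_star_mul_self_eq_of_hasDerivAt_commutator
    (τ := LinearMap.toContinuousLinearMap (traceLinearMap (Fin n) ℝ ℂ)) trace_mul_comm hπ s₁ s₂
  exact congrArg (fun z : ℂ ↦ (1 / 2 : ℝ) * z.re) this

/-- Along a solution of `π' = [π, πᴴ]`, both the anti-hermitian part
`π − πᴴ` and the kinetic energy `½·Re tr(πᴴ·π)` are constant. -/
theorem kinetic_flow_invariants {n : ℕ} [NeZero n]
    (π : ℝ → Matrix (Fin n) (Fin n) ℂ)
    (hπ : ∀ s : ℝ, HasDerivAt π (π s * (π s)ᴴ - (π s)ᴴ * π s) s) :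
    (∀ s₁ s₂ : ℝ, π s₁ - (π s₁)ᴴ = π s₂ - (π s₂)ᴴ) ∧
    (∀ s₁ s₂ : ℝ,
      (1 / 2 : ℝ) * (((π s₁)ᴴ * π s₁).trace).re = (1 / 2 : ℝ) * (((π s₂)ᴴ * π s₂).trace).re) :=
  kinetic_flow_invariants_general π hπ
end

section
/- Let V : M_n(ℂ) → ℝ have group gradient DV. Let U, π : ℝ → M_n(ℂ) be differentiable with U(s) invertible for all s, satisfying Hamilton's equations U'(s) = π(s)·U(s) and π'(s) = −2·(DV(U(s)))ᴴ + [π(s), π(s)ᴴ]. Then the Hamiltonian H(s) := ½·Re tr(π(s)ᴴ·π(s)) + V(U(s)) is constant in s. -/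
/-!
Along the flow, the kinetic energy `½ Re tr(πᴴπ)` changes at the rate `Re tr(πᴴπ')`. In it, the
commutator term `Re tr(πᴴ[π, πᴴ])` vanishes by cyclicity of the trace, and the force term
`−2 Re tr(πᴴ (DV U)ᴴ) = −2 Re tr(π DV U)` cancels the rate `Re tr(π DV U + πᴴ (DV U)ᴴ)` at which
`V(U)` changes, by the defining property of the group gradient applied to `U' = π U`.
-/

open Matrix

attribute [local instance] Matrix.frobeniusNormedAddCommGroup Matrix.frobeniusNormedSpace

namespace Matrix

variable {m R : Type*} [Fintype m]

theorem trace_mul_commutator_self [CommRing R] (A B : Matrix m m R) :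
    (A * (B * A - A * B)).trace = 0 := by
  rw [Matrix.mul_sub, trace_sub, ← Matrix.mul_assoc, ← Matrix.mul_assoc, trace_mul_cycle A B A,
    sub_self]

theorem re_trace_conjTranspose_mul (A B : Matrix m m ℂ) :
    (Aᴴ * B).trace.re = (Bᴴ * A).trace.re := by
  rw [← Complex.conj_re, ← Complex.star_def, ← trace_conjTranspose, conjTranspose_mul,
    conjTranspose_conjTranspose]

theorem re_trace_conjTranspose_mul_conjTranspose (A B : Matrix m m ℂ) :
    (Aᴴ * Bᴴ).trace.re = (A * B).trace.re := by
  rw [← conjTranspose_mul, trace_conjTranspose, trace_mul_comm, Complex.star_def,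
    Complex.conj_re]

theorem _root_.HasDerivAt.re_trace {f : ℝ → Matrix m m ℂ} {f' : Matrix m m ℂ} {s : ℝ}
    (hf : HasDerivAt f f' s) : HasDerivAt (fun t => (f t).trace.re) f'.trace.re s :=
  let reTrace : Matrix m m ℂ →L[ℝ] ℝ :=
    LinearMap.toContinuousLinearMap (Complex.reLm.comp ((traceLinearMap m ℂ ℂ).restrictScalars ℝ))
  reTrace.hasFDerivAt.comp_hasDerivAt s hf

section

attribute [local instance] frobeniusNormedRing frobeniusNormedAlgebra

theorem _root_.HasDerivAt.re_trace_conjTranspose_mul_self [DecidableEq m] {f : ℝ → Matrix m m ℂ}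
    {f' : Matrix m m ℂ} {s : ℝ} (hf : HasDerivAt f f' s) :
    HasDerivAt (fun t => ((f t)ᴴ * f t).trace.re) (2 * ((f s)ᴴ * f').trace.re) s := by
  refine (hf.star.mul hf).re_trace.congr_deriv ?_
  rw [trace_add, Complex.add_re, star_eq_conjTranspose, star_eq_conjTranspose,
    re_trace_conjTranspose_mul f', two_mul]

end

end Matrix

theorem hamiltonian_conservation_general {n : ℕ}
    (V : Matrix (Fin n) (Fin n) ℂ → ℝ)
    (DV : Matrix (Fin n) (Fin n) ℂ → Matrix (Fin n) (Fin n) ℂ)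
    (hV : Differentiable ℝ V)
    (hDV : ∀ U : Matrix (Fin n) (Fin n) ℂ, IsUnit U →
      ∀ X : Matrix (Fin n) (Fin n) ℂ,
        fderiv ℝ V U (X * U) = ((X * DV U + Xᴴ * (DV U)ᴴ).trace).re)
    (U π : ℝ → Matrix (Fin n) (Fin n) ℂ)
    (hUinv : ∀ s : ℝ, IsUnit (U s))
    (hU : ∀ s : ℝ, HasDerivAt U (π s * U s) s)
    (hπ : ∀ s : ℝ, HasDerivAt π
      ((-2 : ℂ) • (DV (U s))ᴴ + (π s * (π s)ᴴ - (π s)ᴴ * π s)) s) :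
    ∀ s₁ s₂ : ℝ,
      (1 / 2 : ℝ) * (((π s₁)ᴴ * π s₁).trace).re + V (U s₁) =
      (1 / 2 : ℝ) * (((π s₂)ᴴ * π s₂).trace).re + V (U s₂) := by
  have hH : ∀ s, HasDerivAt
      (fun t => (1 / 2 : ℝ) * (((π t)ᴴ * π t).trace).re + V (U t)) 0 s := by
    intro s
    have hkin : HasDerivAt (fun t => (1 / 2 : ℝ) * (((π t)ᴴ * π t).trace).re)
        (-2 * (π s * DV (U s)).trace.re) s := by
      refine (((hπ s).re_trace_conjTranspose_mul_self).const_mul (1 / 2 : ℝ)).congr_deriv ?_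
      simp only [Matrix.mul_add, Matrix.mul_smul, trace_add, trace_smul, Complex.add_re,
        trace_mul_commutator_self, re_trace_conjTranspose_mul_conjTranspose, smul_eq_mul,
        Complex.mul_re, Complex.neg_re, Complex.neg_im, Complex.re_ofNat, Complex.im_ofNat,
        Complex.zero_re]
      ring
    have hpot : HasDerivAt (fun t => V (U t)) (2 * (π s * DV (U s)).trace.re) s := by
      refine ((hV (U s)).hasFDerivAt.comp_hasDerivAt s (hU s)).congr_deriv
        ((hDV (U s) (hUinv s) (π s)).trans ?_)
      rw [trace_add, Complex.add_re, re_trace_conjTranspose_mul_conjTranspose, two_mul]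
    exact (hkin.add hpot).congr_deriv (by ring)
  exact is_const_of_deriv_eq_zero (fun t => (hH t).differentiableAt) (fun t => (hH t).deriv)

/-- For a potential `V` with group gradient `DV`, Hamilton's equations
`U' = π·U`, `π' = −2·(DV(U))ᴴ + [π, πᴴ]` conserve the Hamiltonian
`H = ½·Re tr(πᴴ·π) + V(U)`. -/
theorem hamiltonian_conservation {n : ℕ} [NeZero n]
    (V : Matrix (Fin n) (Fin n) ℂ → ℝ)
    (DV : Matrix (Fin n) (Fin n) ℂ → Matrix (Fin n) (Fin n) ℂ)
    (hV : Differentiable ℝ V)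
    (hDV : ∀ U : Matrix (Fin n) (Fin n) ℂ, IsUnit U →
      ∀ X : Matrix (Fin n) (Fin n) ℂ,
        fderiv ℝ V U (X * U) = ((X * DV U + Xᴴ * (DV U)ᴴ).trace).re)
    (U π : ℝ → Matrix (Fin n) (Fin n) ℂ)
    (hUinv : ∀ s : ℝ, IsUnit (U s))
    (hU : ∀ s : ℝ, HasDerivAt U (π s * U s) s)
    (hπ : ∀ s : ℝ, HasDerivAt π
      ((-2 : ℂ) • (DV (U s))ᴴ + (π s * (π s)ᴴ - (π s)ᴴ * π s)) s) :
    ∀ s₁ s₂ : ℝ,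
      (1 / 2 : ℝ) * (((π s₁)ᴴ * π s₁).trace).re + V (U s₁) =
      (1 / 2 : ℝ) * (((π s₂)ᴴ * π s₂).trace).re + V (U s₂) :=
  hamiltonian_conservation_general V DV hV hDV U π hUinv hU hπ
end

section
/- Let μ be the Haar probability measure on the special unitary group SU(2), and for U ∈ SU(2) define the energy density e(U) := −(1/4)·tr(U + U⁻¹), which is a real number since U⁻¹ = Uᴴ. Fix x ∈ ℝ (i.e., purely imaginary coupling β = ix) and suppose ∫ exp(−ix·e(U)) dμ(U) ≠ 0. Then the denominator ∫ exp(−ix·e(U)) dμ(U) is real, the numerator ∫ exp(−ix·e(U))·e(U) dμ(U) is purely imaginary, and hence the expectation value ⟨e⟩ := (∫ exp(−ix·e(U))·e(U) dμ(U)) / (∫ exp(−ix·e(U)) dμ(U)) has zero real part. -/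
/-!
Left multiplication by `-1 ∈ SU(2)` preserves Haar measure and negates the energy density.
Hence the complex conjugate of `∫ exp(-ixe)`, namely `∫ exp(ixe)`, equals the integral itself,
while conjugating `∫ exp(-ixe) e` gives its negative.
-/

open Matrix MeasureTheory

noncomputable instance : MeasurableSpace (Matrix.specialUnitaryGroup (Fin 2) ℂ) :=
  borel _

/-- The energy density `e(U) = −(1/4)·tr(U + U⁻¹)` of the one-site `SU(2)` model
(a real number, since `U⁻¹ = Uᴴ` for `U ∈ SU(2)`). -/
noncomputable def energyDensity (U : Matrix.specialUnitaryGroup (Fin 2) ℂ) : ℝ :=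
  ((-(1 / 4 : ℂ)) *
    (((U : Matrix (Fin 2) (Fin 2) ℂ) + (U : Matrix (Fin 2) (Fin 2) ℂ)⁻¹).trace)).re

section OddObservable

variable {G : Type*} [Group G] [MeasurableSpace G] [MeasurableMul G] (μ : Measure G)
  [μ.IsMulLeftInvariant] {e : G → ℝ} {g : G}

theorem integral_comp_neg_of_odd (he : ∀ U, e (g * U) = -e U) (F : ℝ → ℂ) :
    ∫ U, F (-e U) ∂μ = ∫ U, F (e U) ∂μ := by
  simp_rw [← he]
  exact integral_mul_left_eq_self (fun U => F (e U)) g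

theorem im_integral_comp_eq_zero_of_odd (he : ∀ U, e (g * U) = -e U) {F : ℝ → ℂ}
    (hF : ∀ t, starRingEnd ℂ (F t) = F (-t)) : (∫ U, F (e U) ∂μ).im = 0 := by
  rw [← Complex.conj_eq_iff_im, ← integral_conj]
  simp_rw [hF]
  exact integral_comp_neg_of_odd μ he F

/-- Multiplying by `I` reduces this to `im_integral_comp_eq_zero_of_odd`. -/
theorem re_integral_comp_eq_zero_of_odd (he : ∀ U, e (g * U) = -e U) {F : ℝ → ℂ}
    (hF : ∀ t, starRingEnd ℂ (F t) = -F (-t)) : (∫ U, F (e U) ∂μ).re = 0 := by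
  have h := im_integral_comp_eq_zero_of_odd μ he (F := fun t => Complex.I * F t) fun t => by
    simp [hF]
  simpa [integral_const_mul] using h

end OddObservable

namespace Matrix.specialUnitaryGroup

variable {n α : Type*} [Fintype n] [DecidableEq n] [CommRing α] [StarRing α]

theorem coe_inv_eq_star (U : specialUnitaryGroup n α) :
    (U : Matrix n n α)⁻¹ = star (U : Matrix n n α) :=
  inv_eq_right_inv (mem_unitaryGroup_iff.mp U.2.1)

def negOne : specialUnitaryGroup (Fin 2) α :=
  ⟨-1, by simp [mem_specialUnitaryGroup_iff, mem_unitaryGroup_iff, det_neg]⟩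

theorem coe_negOne_mul (U : specialUnitaryGroup (Fin 2) α) :
    ((negOne * U : specialUnitaryGroup (Fin 2) α) : Matrix (Fin 2) (Fin 2) α) = -U :=
  neg_one_mul _

end Matrix.specialUnitaryGroup

instance : BorelSpace (specialUnitaryGroup (Fin 2) ℂ) := ⟨rfl⟩

theorem energyDensity_negOne_mul (U : specialUnitaryGroup (Fin 2) ℂ) :
    energyDensity (specialUnitaryGroup.negOne * U) = -energyDensity U := by
  rw [energyDensity, energyDensity, specialUnitaryGroup.coe_inv_eq_star,
    specialUnitaryGroup.coe_inv_eq_star, specialUnitaryGroup.coe_negOne_mul, star_neg, ← neg_add,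
    trace_neg, mul_neg, Complex.neg_re]

theorem su2_energy_expectation_purely_imaginary_general
    (μ : Measure (Matrix.specialUnitaryGroup (Fin 2) ℂ))
    [μ.IsMulLeftInvariant]
    (x : ℝ) :
    (∫ U, Complex.exp (-(Complex.I * (x : ℂ) * (energyDensity U : ℂ))) ∂μ).im = 0 ∧
    (∫ U, Complex.exp (-(Complex.I * (x : ℂ) * (energyDensity U : ℂ))) *
        (energyDensity U : ℂ) ∂μ).re = 0 ∧
    ((∫ U, Complex.exp (-(Complex.I * (x : ℂ) * (energyDensity U : ℂ))) *
        (energyDensity U : ℂ) ∂μ) /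
      (∫ U, Complex.exp (-(Complex.I * (x : ℂ) * (energyDensity U : ℂ))) ∂μ)).re = 0 := by
  have hZ := im_integral_comp_eq_zero_of_odd μ energyDensity_negOne_mul
    (F := fun t => Complex.exp (-(Complex.I * x * t))) fun t => by
      simp [← Complex.exp_conj]
  have hN := re_integral_comp_eq_zero_of_odd μ energyDensity_negOne_mul
    (F := fun t => Complex.exp (-(Complex.I * x * t)) * t) fun t => by
      simp [← Complex.exp_conj]
  refine ⟨hZ, hN, ?_⟩
  rw [Complex.div_re, hN, hZ]
  simp

/-- For the Haar probability measure `μ` on `SU(2)` and purely imaginary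
coupling `β = ix`, the partition function is real, the numerator of `⟨e⟩` is purely
imaginary, and hence `⟨e⟩` has zero real part. -/
theorem su2_energy_expectation_purely_imaginary
    (μ : Measure (Matrix.specialUnitaryGroup (Fin 2) ℂ))
    [IsProbabilityMeasure μ] [μ.IsMulLeftInvariant]
    (x : ℝ)
    (hden : (∫ U, Complex.exp (-(Complex.I * (x : ℂ) * (energyDensity U : ℂ))) ∂μ) ≠ 0) :
    (∫ U, Complex.exp (-(Complex.I * (x : ℂ) * (energyDensity U : ℂ))) ∂μ).im = 0 ∧
    (∫ U, Complex.exp (-(Complex.I * (x : ℂ) * (energyDensity U : ℂ))) *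
        (energyDensity U : ℂ) ∂μ).re = 0 ∧
    ((∫ U, Complex.exp (-(Complex.I * (x : ℂ) * (energyDensity U : ℂ))) *
        (energyDensity U : ℂ) ∂μ) /
      (∫ U, Complex.exp (-(Complex.I * (x : ℂ) * (energyDensity U : ℂ))) ∂μ)).re = 0 :=
  su2_energy_expectation_purely_imaginary_general μ x
end
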